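/- arXiv:1606.01332 — 3 statements merged into one kernel-verified Lean document; each statement's English description precedes it below -/
import Mathlib

section
/- Let v:[0,1]→ℝ be bounded Lipschitz with stopped flow Φ_t, let ψ ∈ C¹([0,1]×[0,T]) satisfy ∂_x ψ(0,t) = ∂_x ψ(1,t) = 0 for all t ∈ [0,T]. Then for every y ∈ [0,1], the function t ↦ ψ(Φ_t(y), t) is differentiable on [0,T] with derivative ∂_x ψ(Φ_t(y),t)·v(Φ_t(y)) + ∂_t ψ(Φ_t(y),t) for t < τ_∂(y), and with derivative ∂_t ψ(Φ_t(y),t) for t ≥ τ_∂(y), where τ_∂(y) is the boundary hitting time; moreover ψ(Φ_T(y),T) − ψ(y,0) = ∫_0^T [∂_x ψ(Φ_t(y),t)·v(Φ_t(y)) + ∂_t ψ(Φ_t(y),t)] dt. -/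
/-!
Before the hitting time `τ` the trajectory solves `ẋ = v(x)` and the chain rule gives the
full derivative. From `τ` on the trajectory is frozen at `0` or `1`, so its right derivative
is `0`, while its left derivative always exists (at `τ` itself it is `v(Φ_τ)`, the limit of the
continuous derivative `v ∘ Φ`). The boundary condition `∂ₓψ = 0` at `{0, 1}` makes the
`∂ₓψ`-term vanish for every one-sided velocity, so both one-sided derivatives of
`t ↦ ψ(Φ_t(y), t)` equal `∂ₜψ`. The derivative is thus `∂ₓψ · v + ∂ₜψ` everywhere on `[0, T]`,
which is continuous, and the integral identity is the fundamental theorem of calculus.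
-/

open MeasureTheory Set Filter
open scoped ENNReal NNReal Topology

noncomputable section

abbrev I01 : Type := Set.Icc (0:ℝ) 1

noncomputable def tvNorm (μ : SignedMeasure I01) : ℝ :=
  (μ.totalVariation Set.univ).toReal

noncomputable def supNorm (φ : I01 → ℝ) : ℝ := ⨆ x : I01, |φ x|

noncomputable def lipConst (φ : I01 → ℝ) : ℝ :=
  sInf {K : ℝ | 0 ≤ K ∧ ∀ x y : I01, |φ x - φ y| ≤ K * dist x y}

noncomputable def blNorm (φ : I01 → ℝ) : ℝ := supNorm φ + lipConst φ

noncomputable def pairSM (μ : SignedMeasure I01) (φ : I01 → ℝ) : ℝ :=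
  ∫ x, φ x ∂μ.toJordanDecomposition.posPart - ∫ x, φ x ∂μ.toJordanDecomposition.negPart

noncomputable def dualBLNorm (μ : SignedMeasure I01) : ℝ :=
  sSup {r : ℝ | ∃ φ : I01 → ℝ, Continuous φ ∧ blNorm φ ≤ 1 ∧ r = |pairSM μ φ|}

noncomputable def Ff (f : I01 → ℝ) (μ : SignedMeasure I01) : SignedMeasure I01 :=
  μ.toJordanDecomposition.posPart.withDensityᵥ f -
    μ.toJordanDecomposition.negPart.withDensityᵥ f

/-- The stopped flow on `[0,1]` generated by a velocity field `v`: trajectories solve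
`ẋ = v(x)` up to the boundary-hitting time `τ` and are frozen afterwards at the boundary
point reached; `τ` is maximal (the trajectory is stopped only where `v` pushes it
strictly out of `[0,1]`). -/
structure StoppedFlow where
  v : I01 → ℝ
  Φ : ℝ → I01 → I01
  τ : I01 → ℝ≥0∞
  init : ∀ y, Φ 0 y = y
  ode : ∀ y, ∀ t : ℝ, 0 ≤ t → ENNReal.ofReal t < τ y →
      HasDerivAt (fun s => (Φ s y : ℝ)) (v (Φ t y)) t
  stopped : ∀ y, ∀ t : ℝ, τ y ≤ ENNReal.ofReal t →
      (Φ t y : ℝ) = 0 ∨ (Φ t y : ℝ) = 1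
  frozen : ∀ y, ∀ s t : ℝ, τ y ≤ ENNReal.ofReal s → s ≤ t → Φ t y = Φ s y
  maximal : ∀ y, τ y ≠ ⊤ →
      (((Φ (τ y).toReal y : ℝ) = 0 ∧ v (Φ (τ y).toReal y) < 0) ∨
       ((Φ (τ y).toReal y : ℝ) = 1 ∧ 0 < v (Φ (τ y).toReal y)))
  cont_t : ∀ y, Continuous fun t => Φ t y
  cont_y : ∀ t : ℝ, 0 ≤ t → Continuous fun y => Φ t y

theorem hasDerivWithinAt_comp_prodMk {ψ ψx ψt : ℝ → ℝ → ℝ} {U : Set (ℝ × ℝ)} {J : Set ℝ}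
    {c : ℝ → ℝ} {w t : ℝ}
    (hψ : HasFDerivWithinAt (fun p : ℝ × ℝ => ψ p.1 p.2)
      (ψx (c t) t • ContinuousLinearMap.fst ℝ ℝ ℝ + ψt (c t) t • ContinuousLinearMap.snd ℝ ℝ ℝ)
      U (c t, t))
    (hc : HasDerivWithinAt c w J t) (hcU : ∀ s ∈ J, (c s, s) ∈ U) :
    HasDerivWithinAt (fun s => ψ (c s) s) (ψx (c t) t * w + ψt (c t) t) J t := by
  have h := hψ.comp_hasDerivWithinAt_of_eq t (hc.prodMk (hasDerivWithinAt_id t J)) hcU rfl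
  simpa [Function.comp_def, mul_comm] using h

namespace StoppedFlow

variable (F : StoppedFlow) (y : I01)

theorem map_eq_zero_of_hittingTime_le {f : ℝ → ℝ} (hf0 : f 0 = 0) (hf1 : f 1 = 0) {t : ℝ}
    (hτ : F.τ y ≤ ENNReal.ofReal t) : f (F.Φ t y) = 0 := by
  rcases F.stopped y t hτ with h | h <;> rw [h] <;> assumption

theorem hasDerivWithinAt_Ici_of_hittingTime_le {t : ℝ} (hτ : F.τ y ≤ ENNReal.ofReal t) :
    HasDerivWithinAt (fun s => (F.Φ s y : ℝ)) 0 (Ici t) t :=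
  (hasDerivWithinAt_const t _ (F.Φ t y : ℝ)).congr
    (fun s hs => by rw [F.frozen y t s hτ hs]) rfl

theorem hasDerivAt_of_hittingTime_lt {t : ℝ} (hτ : F.τ y < ENNReal.ofReal t) :
    HasDerivAt (fun s => (F.Φ s y : ℝ)) 0 t := by
  have hτ_ne_top : F.τ y ≠ ⊤ := hτ.ne_top
  have hτ_lt : (F.τ y).toReal < t := (ENNReal.lt_ofReal_iff_toReal_lt hτ_ne_top).1 hτ
  have hτ_le : F.τ y ≤ ENNReal.ofReal (F.τ y).toReal := (ENNReal.ofReal_toReal hτ_ne_top).ge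
  refine (hasDerivAt_const t (F.Φ t y : ℝ)).congr_of_eventuallyEq ?_
  filter_upwards [Ici_mem_nhds hτ_lt] with s hs
  rw [F.frozen y _ s hτ_le hs, F.frozen y _ t hτ_le hτ_lt.le]

theorem hasDerivWithinAt_Icc_of_le_hittingTime (hv : Continuous F.v) {t : ℝ} (ht : 0 ≤ t)
    (hτ : ENNReal.ofReal t ≤ F.τ y) :
    HasDerivWithinAt (fun s => (F.Φ s y : ℝ)) (F.v (F.Φ t y)) (Icc 0 t) t := by
  rcases ht.eq_or_lt with rfl | ht_pos
  · rw [Icc_self]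
    exact HasFDerivWithinAt.of_not_accPt (by rw [accPt_principal_iff_nhdsWithin]; simp)
  have hode : ∀ s ∈ Ioo 0 t, HasDerivAt (fun s => (F.Φ s y : ℝ)) (F.v (F.Φ s y)) s :=
    fun s hs => F.ode y s hs.1.le <|
      ((ENNReal.ofReal_lt_ofReal_iff ht_pos).2 hs.2).trans_le hτ
  have hIoo : Ioo 0 t ∈ 𝓝[<] t := Ioo_mem_nhdsLT ht_pos
  have hvΦ : Continuous fun s => F.v (F.Φ s y) := hv.comp (F.cont_t y)
  have hlim : Tendsto (deriv fun s => (F.Φ s y : ℝ)) (𝓝[<] t) (𝓝 (F.v (F.Φ t y))) :=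
    (hvΦ.continuousWithinAt.tendsto).congr' <| by
      filter_upwards [hIoo] with s hs using (hode s hs).deriv.symm
  refine (hasDerivWithinAt_Iic_of_tendsto_deriv (fun s hs => (hode s hs).differentiableAt
    |>.differentiableWithinAt) (continuous_subtype_val.comp (F.cont_t y)).continuousWithinAt
    hIoo hlim).mono Icc_subset_Iic_self

theorem exists_hasDerivWithinAt_Icc (hv : Continuous F.v) {t : ℝ} (ht : 0 ≤ t) :
    ∃ w, HasDerivWithinAt (fun s => (F.Φ s y : ℝ)) w (Icc 0 t) t := by
  rcases le_or_gt (ENNReal.ofReal t) (F.τ y) with hτ | hτ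
  · exact ⟨_, F.hasDerivWithinAt_Icc_of_le_hittingTime y hv ht hτ⟩
  · exact ⟨0, (F.hasDerivAt_of_hittingTime_lt y hτ).hasDerivWithinAt⟩

theorem continuousOn_comp_graph {f : ℝ → ℝ → ℝ} {T : ℝ}
    (hf : ContinuousOn (fun p : ℝ × ℝ => f p.1 p.2) (Icc (0:ℝ) 1 ×ˢ Icc (0:ℝ) T)) :
    ContinuousOn (fun t => f (F.Φ t y) t) (Icc 0 T) :=
  hf.comp ((continuous_subtype_val.comp (F.cont_t y)).prodMk continuous_id).continuousOn
    fun s hs => ⟨(F.Φ s y).2, hs⟩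

theorem hasDerivWithinAt_comp_of_hittingTime_le (hv : Continuous F.v) {T : ℝ}
    {ψ ψx ψt : ℝ → ℝ → ℝ} {t : ℝ} (ht : t ∈ Icc 0 T)
    (hψ : HasFDerivWithinAt (fun p : ℝ × ℝ => ψ p.1 p.2)
      (ψx (F.Φ t y) t • ContinuousLinearMap.fst ℝ ℝ ℝ +
        ψt (F.Φ t y) t • ContinuousLinearMap.snd ℝ ℝ ℝ)
      (Icc (0:ℝ) 1 ×ˢ Icc (0:ℝ) T) (F.Φ t y, t))
    (hψx : ψx (F.Φ t y) t = 0) (hτ : F.τ y ≤ ENNReal.ofReal t) :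
    HasDerivWithinAt (fun s => ψ (F.Φ s y : ℝ) s) (ψt (F.Φ t y : ℝ) t) (Icc 0 T) t := by
  obtain ⟨w, hw⟩ := F.exists_hasDerivWithinAt_Icc y hv ht.1
  have hleft := hasDerivWithinAt_comp_prodMk (c := fun s => (F.Φ s y : ℝ)) hψ hw
    fun s hs => ⟨(F.Φ s y).2, hs.1, hs.2.trans ht.2⟩
  have hright := hasDerivWithinAt_comp_prodMk (c := fun s => (F.Φ s y : ℝ)) hψ
    ((F.hasDerivWithinAt_Ici_of_hittingTime_le y hτ).mono Icc_subset_Ici_self)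
    fun s hs => ⟨(F.Φ s y).2, ht.1.trans hs.1, hs.2⟩
  rw [hψx, zero_mul, zero_add] at hleft hright
  rw [← Icc_union_Icc_eq_Icc ht.1 ht.2]
  exact hleft.union hright

end StoppedFlow

/-- Differentiation of `t ↦ ψ(Φ_t(y), t)` for a `C¹` test function `ψ` (with partial
derivatives `ψx`, `ψt` on `[0,1]×[0,T]`) satisfying the no-flux boundary conditions
`∂_x ψ(0,t) = ∂_x ψ(1,t) = 0`, together with the fundamental theorem of calculus
identity along stopped trajectories. -/
theorem deriv_along_stopped_flow (F : StoppedFlow) (K : ℝ≥0) (hv : LipschitzWith K F.v)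
    (T : ℝ) (hT : 0 < T) (ψ ψx ψt : ℝ → ℝ → ℝ)
    (hψ : ∀ x ∈ Set.Icc (0:ℝ) 1, ∀ t ∈ Set.Icc (0:ℝ) T,
      HasFDerivWithinAt (fun p : ℝ × ℝ => ψ p.1 p.2)
        ((ψx x t) • (ContinuousLinearMap.fst ℝ ℝ ℝ) +
          (ψt x t) • (ContinuousLinearMap.snd ℝ ℝ ℝ))
        (Set.Icc (0:ℝ) 1 ×ˢ Set.Icc (0:ℝ) T) (x, t))
    (hψx : ContinuousOn (fun p : ℝ × ℝ => ψx p.1 p.2) (Set.Icc (0:ℝ) 1 ×ˢ Set.Icc (0:ℝ) T))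
    (hψt : ContinuousOn (fun p : ℝ × ℝ => ψt p.1 p.2) (Set.Icc (0:ℝ) 1 ×ˢ Set.Icc (0:ℝ) T))
    (hbc : ∀ t ∈ Set.Icc (0:ℝ) T, ψx 0 t = 0 ∧ ψx 1 t = 0)
    (y : I01) :
    (∀ t ∈ Set.Icc (0:ℝ) T, ENNReal.ofReal t < F.τ y →
      HasDerivWithinAt (fun s => ψ (F.Φ s y : ℝ) s)
        (ψx (F.Φ t y : ℝ) t * F.v (F.Φ t y) + ψt (F.Φ t y : ℝ) t) (Set.Icc 0 T) t) ∧
    (∀ t ∈ Set.Icc (0:ℝ) T, F.τ y ≤ ENNReal.ofReal t →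
      HasDerivWithinAt (fun s => ψ (F.Φ s y : ℝ) s)
        (ψt (F.Φ t y : ℝ) t) (Set.Icc 0 T) t) ∧
    ψ (F.Φ T y : ℝ) T - ψ (y : ℝ) 0 =
      ∫ t in (0:ℝ)..T, (ψx (F.Φ t y : ℝ) t * F.v (F.Φ t y) + ψt (F.Φ t y : ℝ) t) := by
  have hψ' : ∀ t ∈ Icc 0 T, HasFDerivWithinAt (fun p : ℝ × ℝ => ψ p.1 p.2) _ _ (F.Φ t y, t) :=
    fun t ht => hψ _ (F.Φ t y).2 t ht
  have hψx0 : ∀ t ∈ Icc 0 T, F.τ y ≤ ENNReal.ofReal t → ψx (F.Φ t y) t = 0 := fun t ht =>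
    F.map_eq_zero_of_hittingTime_le y (f := (ψx · t)) (hbc t ht).1 (hbc t ht).2
  have hbefore : ∀ t ∈ Icc 0 T, ENNReal.ofReal t < F.τ y → HasDerivWithinAt
      (fun s => ψ (F.Φ s y : ℝ) s) (ψx (F.Φ t y) t * F.v (F.Φ t y) + ψt (F.Φ t y) t)
      (Icc 0 T) t := fun t ht hτ =>
    hasDerivWithinAt_comp_prodMk (hψ' t ht) (F.ode y t ht.1 hτ).hasDerivWithinAt
      fun s hs => ⟨(F.Φ s y).2, hs⟩
  have hafter : ∀ t ∈ Icc 0 T, F.τ y ≤ ENNReal.ofReal t → HasDerivWithinAt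
      (fun s => ψ (F.Φ s y : ℝ) s) (ψt (F.Φ t y) t) (Icc 0 T) t := fun t ht hτ =>
    F.hasDerivWithinAt_comp_of_hittingTime_le y hv.continuous ht (hψ' t ht) (hψx0 t ht hτ) hτ
  have hderiv : ∀ t ∈ Icc 0 T, HasDerivWithinAt (fun s => ψ (F.Φ s y : ℝ) s)
      (ψx (F.Φ t y) t * F.v (F.Φ t y) + ψt (F.Φ t y) t) (Icc 0 T) t := by
    intro t ht
    rcases lt_or_ge (ENNReal.ofReal t) (F.τ y) with hτ | hτ
    · exact hbefore t ht hτ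
    · simpa [hψx0 t ht hτ] using hafter t ht hτ
  have hd_cont : ContinuousOn
      (fun t => ψx (F.Φ t y) t * F.v (F.Φ t y) + ψt (F.Φ t y) t) (Icc 0 T) :=
    ((F.continuousOn_comp_graph y hψx).mul (hv.continuous.comp (F.cont_t y)).continuousOn).add
      (F.continuousOn_comp_graph y hψt)
  refine ⟨hbefore, hafter, ?_⟩
  rw [intervalIntegral.integral_eq_sub_of_hasDerivAt_of_le hT.le
    (fun t ht => (hderiv t ht).continuousWithinAt)
    (fun t ht => (hderiv t (Ioo_subset_Icc_self ht)).hasDerivAt (Icc_mem_nhds ht.1 ht.2))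
    (hd_cont.intervalIntegrable_of_Icc hT.le), F.init]

end
end

section
/- Let v ∈ BL([0,1]) with stopped flow Φ_t and push-forward semigroup P_t, and let ν₀ ∈ M([0,1]). Then for every ψ ∈ C¹([0,1]×[0,T]) with ∂_x ψ(0,t) = ∂_x ψ(1,t) = 0 for all t ∈ [0,T], one has ∫_0^T ⟨P_t ν₀, ∂_x ψ(·,t)·v + ∂_t ψ(·,t)⟩ dt = ⟨P_T ν₀, ψ(·,T)⟩ − ⟨ν₀, ψ(·,0)⟩. -/
open MeasureTheory Set Filter
open scoped ENNReal NNReal Topology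

noncomputable section

/-! Along a trajectory, `t ↦ ψ (Φ_t y) t` has right derivative `∂ₓψ · v + ∂ₜψ` at every time:
before the stopping time by the chain rule, afterwards because the trajectory is frozen at a
boundary point, where `∂ₓψ` vanishes. The fundamental theorem of calculus therefore gives the
identity for Dirac masses `ν₀ = δ_y`. Integrating over `y` against the Jordan parts of `ν₀`,
and exchanging the two integrals by Fubini (the integrand is bounded and separately continuous
in `t` and `y`), gives it for `ν₀`. -/

open Function

lemma Continuous.integrable_of_compactSpace {X E : Type*} [TopologicalSpace X] [CompactSpace X]
    [MeasurableSpace X] [OpensMeasurableSpace X] [NormedAddCommGroup E] {μ : Measure X}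
    [IsFiniteMeasure μ] {φ : X → E} (hφ : Continuous φ) : Integrable φ μ :=
  hφ.integrable_of_hasCompactSupport (HasCompactSupport.of_compactSpace φ)

lemma pairSM_eq_integral_sub {ν : SignedMeasure I01} {α β : Measure I01} [IsFiniteMeasure α]
    [IsFiniteMeasure β] (hν : ν = α.toSignedMeasure - β.toSignedMeasure) {φ : I01 → ℝ}
    (hφ : Continuous φ) :
    pairSM ν φ = ∫ x, φ x ∂α - ∫ x, φ x ∂β := by
  set j := ν.toJordanDecomposition
  have hsum : j.posPart + β = α + j.negPart := by
    rw [← Measure.toSignedMeasure_eq_toSignedMeasure_iff, Measure.toSignedMeasure_add,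
      Measure.toSignedMeasure_add]
    have hj : j.posPart.toSignedMeasure - j.negPart.toSignedMeasure = ν :=
      ν.toSignedMeasure_toJordanDecomposition
    linear_combination (norm := abel_nf) hj.trans hν
  have := congrArg (fun μ => ∫ x, φ x ∂μ) hsum
  simp only [integral_add_measure hφ.integrable_of_compactSpace
    hφ.integrable_of_compactSpace] at this
  unfold pairSM
  linarith

lemma pairSM_map (ν : SignedMeasure I01) {f : I01 → I01} (hf : Continuous f) {φ : I01 → ℝ}
    (hφ : Continuous φ) : pairSM (ν.map f) φ = pairSM ν (φ ∘ f) := by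
  set j := ν.toJordanDecomposition
  have hmap : ν.map f = (j.posPart.map f).toSignedMeasure - (j.negPart.map f).toSignedMeasure := by
    ext s hs
    rw [VectorMeasure.map_apply _ hf.measurable hs, Measure.toSignedMeasure_sub_apply hs,
      map_measureReal_apply hf.measurable hs, map_measureReal_apply hf.measurable hs,
      ← Measure.toSignedMeasure_sub_apply (hf.measurable hs)]
    conv_lhs => rw [← ν.toSignedMeasure_toJordanDecomposition]
    rfl
  rw [pairSM_eq_integral_sub hmap hφ, integral_map hf.aemeasurable hφ.aestronglyMeasurable,
    integral_map hf.aemeasurable hφ.aestronglyMeasurable]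
  rfl

lemma pairSM_sub (ν : SignedMeasure I01) {φ χ : I01 → ℝ} (hφ : Continuous φ) (hχ : Continuous χ) :
    pairSM ν (φ - χ) = pairSM ν φ - pairSM ν χ := by
  unfold pairSM
  simp only [Pi.sub_apply]
  rw [integral_sub hφ.integrable_of_compactSpace hχ.integrable_of_compactSpace,
    integral_sub hφ.integrable_of_compactSpace hχ.integrable_of_compactSpace]
  ring

lemma intervalIntegral_pairSM_comm (ν : SignedMeasure I01) {a b : ℝ} (hab : a ≤ b)
    {g : ℝ → I01 → ℝ} (hg_t : ∀ y, ContinuousOn (fun t => g t y) (Icc a b))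
    (hg_y : ∀ t ∈ Icc a b, Continuous (g t)) {C : ℝ} (hC : ∀ t ∈ Icc a b, ∀ y, |g t y| ≤ C) :
    ∫ t in a..b, pairSM ν (g t) = pairSM ν (fun y => ∫ t in a..b, g t y) := by
  -- Extended constantly outside `[a, b]`, `g` is separately continuous on all of `ℝ × I01`,
  -- hence jointly measurable.
  set gc : ℝ → I01 → ℝ := fun t => g (projIcc a b hab t)
  have hg_gc : EqOn g gc (uIcc a b) := fun t ht => by
    rw [uIcc_of_le hab] at ht
    simp only [gc, projIcc_of_mem hab ht]
  have hgc_int : ∀ (μ : Measure I01) [IsFiniteMeasure μ],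
      Integrable (uncurry gc) ((volume.restrict (uIoc a b)).prod μ) := by
    intro μ _
    have : IsFiniteMeasure (volume.restrict (uIoc a b)) :=
      isFiniteMeasure_restrict.2 measure_Ioc_lt_top.ne
    have hmeas : Measurable (uncurry gc) :=
      measurable_uncurry_of_continuous_of_measurable
        (fun y => (hg_t y).comp_continuous continuous_projIcc.subtype_val
          fun t => (projIcc a b hab t).2)
        (fun t => (hg_y _ (projIcc a b hab t).2).measurable)
    exact .of_bound hmeas.aestronglyMeasurable C
      (ae_of_all _ fun p => hC _ (projIcc a b hab p.1).2 p.2)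
  have hgc_marginal : ∀ (μ : Measure I01) [IsFiniteMeasure μ],
      IntervalIntegrable (fun t => ∫ y, gc t y ∂μ) volume a b := fun μ _ =>
    intervalIntegrable_iff.2 (hgc_int μ).integral_prod_left
  calc ∫ t in a..b, pairSM ν (g t) = ∫ t in a..b, pairSM ν (gc t) :=
        intervalIntegral.integral_congr fun t ht => by simp only [hg_gc ht]
    _ = pairSM ν (fun y => ∫ t in a..b, gc t y) := by
        unfold pairSM
        rw [intervalIntegral.integral_sub (hgc_marginal _) (hgc_marginal _),
          intervalIntegral_integral_swap (hgc_int _), intervalIntegral_integral_swap (hgc_int _)]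
    _ = pairSM ν (fun y => ∫ t in a..b, g t y) := by
        congr 1
        funext y
        exact intervalIntegral.integral_congr fun t ht => by simp only [hg_gc ht]

lemma ContinuousOn.uncurry_subtype {α β γ : Type*} [TopologicalSpace α] [TopologicalSpace β]
    [TopologicalSpace γ] {s : Set α} {u : Set β} {h : α → β → γ}
    (hh : ContinuousOn (fun p : α × β => h p.1 p.2) (s ×ˢ u)) :
    ContinuousOn (uncurry fun (x : s) t => h x t) (univ ×ˢ u) :=
  hh.comp (continuous_subtype_val.prodMap continuous_id).continuousOn fun p hp => ⟨p.1.2, hp.2⟩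

lemma ContinuousOn.continuous_uncurry_right {α β γ : Type*} [TopologicalSpace α]
    [TopologicalSpace β] [TopologicalSpace γ] {u : Set β} {L : α → β → γ}
    (hL : ContinuousOn (uncurry L) (univ ×ˢ u)) {t : β} (ht : t ∈ u) :
    Continuous fun x => L x t :=
  continuousOn_univ.1 <|
    hL.comp (continuous_id.prodMk continuous_const).continuousOn fun _ _ => ⟨trivial, ht⟩

lemma HasFDerivWithinAt.hasDerivWithinAt_graph {ψ : ℝ → ℝ → ℝ} {a b : ℝ} {S : Set (ℝ × ℝ)}
    {γ : ℝ → ℝ} {γ' t : ℝ} {s : Set ℝ}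
    (hψ : HasFDerivWithinAt (fun p : ℝ × ℝ => ψ p.1 p.2)
      (a • ContinuousLinearMap.fst ℝ ℝ ℝ + b • ContinuousLinearMap.snd ℝ ℝ ℝ) S (γ t, t))
    (hγ : HasDerivWithinAt γ γ' s t) (hS : MapsTo (fun r => (γ r, r)) s S) :
    HasDerivWithinAt (fun r => ψ (γ r) r) (a * γ' + b) s t := by
  refine (hψ.comp_hasDerivWithinAt_of_eq t (hγ.prodMk (hasDerivWithinAt_id t s)) hS
    rfl).congr_deriv ?_
  simp

namespace StoppedFlow

variable (F : StoppedFlow) {T : ℝ}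

lemma continuousOn_along {L : I01 → ℝ → ℝ} (hL : ContinuousOn (uncurry L) (univ ×ˢ Icc 0 T))
    (y : I01) : ContinuousOn (fun t => L (F.Φ t y) t) (Icc 0 T) :=
  hL.comp ((F.cont_t y).prodMk continuous_id).continuousOn fun _ ht => ⟨trivial, ht⟩

lemma intervalIntegral_pairSM_comm (ν : SignedMeasure I01) (hT : 0 ≤ T) {L : I01 → ℝ → ℝ}
    (hL : ContinuousOn (uncurry L) (univ ×ˢ Icc 0 T)) :
    ∫ t in (0:ℝ)..T, pairSM ν (fun y => L (F.Φ t y) t)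
      = pairSM ν (fun y => ∫ t in (0:ℝ)..T, L (F.Φ t y) t) := by
  obtain ⟨C, hC⟩ := (isCompact_univ.prod isCompact_Icc).exists_bound_of_continuousOn hL
  exact _root_.intervalIntegral_pairSM_comm ν hT (F.continuousOn_along hL)
    (fun t ht => (hL.continuous_uncurry_right ht).comp (F.cont_y t ht.1))
    (fun t ht y => hC (F.Φ t y, t) ⟨trivial, ht⟩)

variable {ψ ψx ψt : ℝ → ℝ → ℝ}
  (hψ : ∀ x ∈ Icc (0:ℝ) 1, ∀ t ∈ Icc (0:ℝ) T,
    HasFDerivWithinAt (fun p : ℝ × ℝ => ψ p.1 p.2)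
      (ψx x t • ContinuousLinearMap.fst ℝ ℝ ℝ + ψt x t • ContinuousLinearMap.snd ℝ ℝ ℝ)
      (Icc (0:ℝ) 1 ×ˢ Icc (0:ℝ) T) (x, t))
  (hbc : ∀ t ∈ Icc (0:ℝ) T, ψx 0 t = 0 ∧ ψx 1 t = 0)

include hψ hbc

lemma hasDerivWithinAt_along (y : I01) {t : ℝ} (ht : t ∈ Ico 0 T) :
    HasDerivWithinAt (fun s => ψ (F.Φ s y) s)
      (ψx (F.Φ t y) t * F.v (F.Φ t y) + ψt (F.Φ t y) t) (Ioi t) t := by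
  have ht' : t ∈ Icc 0 T := Ico_subset_Icc_self ht
  have hψ_at := hψ _ (F.Φ t y).2 t ht'
  have hmaps : ∀ γ : ℝ → I01, MapsTo (fun r => ((γ r : ℝ), r)) (Ioc t T) (Icc 0 1 ×ˢ Icc 0 T) :=
    fun γ r hr => ⟨(γ r).2, ht.1.trans hr.1.le, hr.2⟩
  refine HasDerivWithinAt.mono_of_mem_nhdsWithin ?_ (Ioc_mem_nhdsGT_of_mem ⟨le_rfl, ht.2⟩)
  rcases lt_or_ge (ENNReal.ofReal t) (F.τ y) with hmoving | hstopped
  · exact hψ_at.hasDerivWithinAt_graph (F.ode y t ht.1 hmoving).hasDerivWithinAt (hmaps _)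
  · -- A stopped trajectory sits at a boundary point, where `ψx` vanishes.
    have hψx : ψx (F.Φ t y) t = 0 := by
      rcases F.stopped y t hstopped with h | h <;> rw [h]
      exacts [(hbc t ht').1, (hbc t ht').2]
    have hconst := hψ_at.hasDerivWithinAt_graph
      (hasDerivWithinAt_const t (Ioc t T) (F.Φ t y : ℝ)) (hmaps fun _ => F.Φ t y)
    rw [hψx, zero_mul] at hconst ⊢
    exact hconst.congr (fun r hr => by rw [F.frozen y t r hstopped hr.1.le]) rfl

lemma integral_along_eq_sub (hT : 0 ≤ T) (y : I01)
    (hint : IntervalIntegrable (fun t => ψx (F.Φ t y) t * F.v (F.Φ t y) + ψt (F.Φ t y) t)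
      volume 0 T) :
    ∫ t in (0:ℝ)..T, (ψx (F.Φ t y) t * F.v (F.Φ t y) + ψt (F.Φ t y) t)
      = ψ (F.Φ T y) T - ψ y 0 := by
  have hψ_cont : ContinuousOn (fun t => ψ (F.Φ t y) t) (Icc 0 T) :=
    F.continuousOn_along (L := fun x t => ψ x t)
      (ContinuousOn.uncurry_subtype fun p hp => (hψ p.1 hp.1 p.2 hp.2).continuousWithinAt) y
  rw [intervalIntegral.integral_eq_sub_of_hasDeriv_right_of_le hT hψ_cont
    (fun t ht => F.hasDerivWithinAt_along hψ hbc y (Ioo_subset_Ico_self ht)) hint, F.init]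

end StoppedFlow

/-- For the push-forward semigroup `P_t ν₀ = Φ_t # ν₀` of the stopped flow and any
`C¹` test function with no-flux boundary conditions:
`∫_0^T ⟨P_t ν₀, ∂_x ψ·v + ∂_t ψ⟩ dt = ⟨P_T ν₀, ψ(·,T)⟩ − ⟨ν₀, ψ(·,0)⟩`. -/
theorem pushforward_weak_identity (F : StoppedFlow) (K : ℝ≥0) (hv : LipschitzWith K F.v)
    (ν₀ : SignedMeasure I01) (T : ℝ) (hT : 0 < T) (ψ ψx ψt : ℝ → ℝ → ℝ)
    (hψ : ∀ x ∈ Set.Icc (0:ℝ) 1, ∀ t ∈ Set.Icc (0:ℝ) T,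
      HasFDerivWithinAt (fun p : ℝ × ℝ => ψ p.1 p.2)
        ((ψx x t) • (ContinuousLinearMap.fst ℝ ℝ ℝ) +
          (ψt x t) • (ContinuousLinearMap.snd ℝ ℝ ℝ))
        (Set.Icc (0:ℝ) 1 ×ˢ Set.Icc (0:ℝ) T) (x, t))
    (hψx : ContinuousOn (fun p : ℝ × ℝ => ψx p.1 p.2) (Set.Icc (0:ℝ) 1 ×ˢ Set.Icc (0:ℝ) T))
    (hψt : ContinuousOn (fun p : ℝ × ℝ => ψt p.1 p.2) (Set.Icc (0:ℝ) 1 ×ˢ Set.Icc (0:ℝ) T))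
    (hbc : ∀ t ∈ Set.Icc (0:ℝ) T, ψx 0 t = 0 ∧ ψx 1 t = 0)
    :
    ∫ t in (0:ℝ)..T,
        pairSM (ν₀.map (F.Φ t)) (fun x => ψx (x : ℝ) t * F.v x + ψt (x : ℝ) t)
      = pairSM (ν₀.map (F.Φ T)) (fun x => ψ (x : ℝ) T) - pairSM ν₀ (fun x => ψ (x : ℝ) 0) := by
  set L : I01 → ℝ → ℝ := fun x t => ψx x t * F.v x + ψt x t
  have hL : ContinuousOn (uncurry L) (univ ×ˢ Icc 0 T) :=
    (hψx.uncurry_subtype.mul (hv.continuous.comp continuous_fst).continuousOn).add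
      hψt.uncurry_subtype
  have hψ_cont : ContinuousOn (uncurry fun (x : I01) t => ψ x t) (univ ×ˢ Icc 0 T) :=
    ContinuousOn.uncurry_subtype fun p hp => (hψ p.1 hp.1 p.2 hp.2).continuousWithinAt
  have hψT := hψ_cont.continuous_uncurry_right (right_mem_Icc.2 hT.le)
  have hΦT : Continuous (F.Φ T) := F.cont_y T hT.le
  calc ∫ t in (0:ℝ)..T, pairSM (ν₀.map (F.Φ t)) (fun x => L x t)
      = ∫ t in (0:ℝ)..T, pairSM ν₀ (fun y => L (F.Φ t y) t) :=
        intervalIntegral.integral_congr fun t ht => by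
          rw [uIcc_of_le hT.le] at ht
          exact pairSM_map ν₀ (F.cont_y t ht.1) (hL.continuous_uncurry_right ht)
    _ = pairSM ν₀ (fun y => ∫ t in (0:ℝ)..T, L (F.Φ t y) t) :=
        F.intervalIntegral_pairSM_comm ν₀ hT.le hL
    _ = pairSM ν₀ ((fun y => ψ (F.Φ T y) T) - fun y : I01 => ψ y 0) := by
        congr 1
        funext y
        exact F.integral_along_eq_sub hψ hbc hT.le y
          ((F.continuousOn_along hL y).intervalIntegrable_of_Icc hT.le)
    _ = _ := (pairSM_sub ν₀ (hψT.comp hΦT)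
          (hψ_cont.continuous_uncurry_right (left_mem_Icc.2 hT.le))).trans
        (congrArg (· - _) (pairSM_map ν₀ hΦT hψT).symm)

end
end

section
/- Let v ∈ BL([0,1]) with stopped flow Φ and hitting time τ_∂, and fix T > 0. For z ∈ {0,1}, define Ω_z^T := { y ∈ [0,1] : τ_∂(y) < T and Φ_{τ_∂(y)}(y) = z }. Then Ω_0^T and Ω_1^T are connected subsets of [0,1], and they are disjoint. -/
/-!
Trajectories of the stopped flow cannot cross: where two of them meet, they are either both
frozen at the same boundary point or both still running, and then they coincide afterwards by
uniqueness for the Lipschitz ODE. Hence every `Φ t` is monotone. If `y₁ ≤ y ≤ y₂` and `y₁, y₂`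
exit at `z` before `T`, then at `t = max (τ y₁) (τ y₂)` the point `Φ t y` is squeezed to `z`.
Since `v` points strictly outward at `z` (maximality of `τ y₁`), while a running trajectory
sitting at the boundary has zero velocity there, the trajectory of `y` has stopped at `z` by
time `t`.
-/

open MeasureTheory Set Filter
open scoped ENNReal NNReal Topology

noncomputable section

theorem Continuous.le_of_eventuallyEq_nhdsGT_of_eq {α β : Type*}
    [ConditionallyCompleteLinearOrder α] [TopologicalSpace α] [OrderTopology α]
    [DenselyOrdered α] [LinearOrder β] [TopologicalSpace β] [OrderClosedTopology β]
    {f g : α → β} (hf : Continuous f) (hg : Continuous g) {a b : α} (hab : a ≤ b)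
    (ha : f a ≤ g a) (h : ∀ x ∈ Ico a b, f x = g x → f =ᶠ[𝓝[>] x] g) :
    f b ≤ g b := by
  have hIcc : Icc a b ⊆ {x | f x ≤ g x} := by
    refine ((isClosed_le hf hg).inter isClosed_Icc).Icc_subset_of_forall_mem_nhdsWithin ha ?_
    rintro x ⟨hx, hxI⟩
    rcases (show f x ≤ g x from hx).lt_or_eq with hlt | heq
    · exact mem_nhdsWithin_of_mem_nhds <|
        mem_of_superset ((isOpen_lt hf hg).mem_nhds hlt) fun _ hy => le_of_lt hy
    · exact (h x hxI heq).mono fun _ hy => hy.le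
  exact hIcc ⟨hab, le_rfl⟩

namespace StoppedFlow

variable (F : StoppedFlow)

def exitPoint (y : I01) : I01 := F.Φ (F.τ y).toReal y

theorem Φ_eq_exitPoint {y : I01} {t : ℝ} (ht : 0 ≤ t) (h : F.τ y ≤ ENNReal.ofReal t) :
    F.Φ t y = F.exitPoint y := by
  have hτ : F.τ y ≠ ⊤ := ne_top_of_le_ne_top ENNReal.ofReal_ne_top h
  exact F.frozen y _ t (by rw [ENNReal.ofReal_toReal hτ])
    (ENNReal.toReal_le_of_le_ofReal ht h)

theorem exitPoint_mem_boundary_and_v_ne_zero {y : I01} (hy : F.τ y ≠ ⊤) :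
    ((F.exitPoint y : ℝ) = 0 ∨ (F.exitPoint y : ℝ) = 1) ∧ F.v (F.exitPoint y) ≠ 0 := by
  rcases F.maximal y hy with ⟨h0, hv⟩ | ⟨h1, hv⟩
  · exact ⟨Or.inl h0, hv.ne⟩
  · exact ⟨Or.inr h1, hv.ne'⟩

/-- A running trajectory that touches the boundary has an extremum there. -/
theorem v_eq_zero_of_lt_τ {y : I01} {t : ℝ} (ht : 0 ≤ t) (hlt : ENNReal.ofReal t < F.τ y)
    (hb : (F.Φ t y : ℝ) = 0 ∨ (F.Φ t y : ℝ) = 1) : F.v (F.Φ t y) = 0 := by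
  have hd := F.ode y t ht hlt
  rcases hb with h0 | h1
  · have hmin : IsLocalMin (fun s => (F.Φ s y : ℝ)) t :=
      Eventually.of_forall fun s => by simp only [h0]; exact (F.Φ s y).2.1
    exact hmin.hasDerivAt_eq_zero hd
  · have hmax : IsLocalMax (fun s => (F.Φ s y : ℝ)) t :=
      Eventually.of_forall fun s => by simp only [h1]; exact (F.Φ s y).2.2
    exact hmax.hasDerivAt_eq_zero hd

theorem τ_le_of_Φ_eq_exitPoint {y y' : I01} {t : ℝ} (ht : 0 ≤ t) (hy' : F.τ y' ≠ ⊤)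
    (h : F.Φ t y = F.exitPoint y') : F.τ y ≤ ENNReal.ofReal t := by
  obtain ⟨hb, hv⟩ := F.exitPoint_mem_boundary_and_v_ne_zero hy'
  by_contra! hlt
  rw [← h] at hb hv
  exact hv (F.v_eq_zero_of_lt_τ ht hlt hb)

theorem τ_le_of_Φ_eq {y₁ y₂ : I01} {s : ℝ} (hs : 0 ≤ s) (h₁ : F.τ y₁ ≤ ENNReal.ofReal s)
    (h : F.Φ s y₁ = F.Φ s y₂) : F.τ y₂ ≤ ENNReal.ofReal s :=
  F.τ_le_of_Φ_eq_exitPoint hs (ne_top_of_le_ne_top ENNReal.ofReal_ne_top h₁)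
    (h.symm.trans (F.Φ_eq_exitPoint hs h₁))

theorem eqOn_Icc_of_ofReal_le_τ {K : ℝ≥0} (hv : LipschitzWith K F.v) {y₁ y₂ : I01}
    {s m : ℝ} (hs : 0 ≤ s) (hm₁ : ENNReal.ofReal m ≤ F.τ y₁)
    (hm₂ : ENNReal.ofReal m ≤ F.τ y₂) (h : F.Φ s y₁ = F.Φ s y₂) :
    EqOn (fun u => F.Φ u y₁) (fun u => F.Φ u y₂) (Icc s m) := by
  set V : ℝ → ℝ := F.v ∘ projIcc 0 1 zero_le_one
  have hV : LipschitzWith K V := by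
    simpa using hv.comp (LipschitzWith.projIcc (zero_le_one' ℝ))
  have hderiv : ∀ y : I01, ENNReal.ofReal m ≤ F.τ y → ∀ u ∈ Ico s m,
      HasDerivWithinAt (fun w => (F.Φ w y : ℝ)) (V (F.Φ u y)) (Ici u) u := by
    intro y hm u hu
    have hu₀ : 0 ≤ u := hs.trans hu.1
    have hlt : ENNReal.ofReal u < F.τ y :=
      ((ENNReal.ofReal_lt_ofReal_iff (hu₀.trans_lt hu.2)).2 hu.2).trans_le hm
    simpa [V] using (F.ode y u hu₀ hlt).hasDerivWithinAt
  have hcont : ∀ y : I01, Continuous fun w => (F.Φ w y : ℝ) :=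
    fun y => continuous_subtype_val.comp (F.cont_t y)
  intro u hu
  exact Subtype.ext <| ODE_solution_unique_of_mem_Icc_right (v := fun _ => V)
    (s := fun _ => univ) (fun _ _ => hV.lipschitzOnWith) (hcont y₁).continuousOn
    (hderiv y₁ hm₁) (fun _ _ => trivial) (hcont y₂).continuousOn (hderiv y₂ hm₂)
    (fun _ _ => trivial) (congrArg Subtype.val h) hu

/-- Two trajectories that meet stay together: either both are frozen at the same boundary
point, or both are still running and ODE uniqueness applies. -/
theorem eventuallyEq_nhdsGT_of_Φ_eq {K : ℝ≥0} (hv : LipschitzWith K F.v) {y₁ y₂ : I01}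
    {s : ℝ} (hs : 0 ≤ s) (h : F.Φ s y₁ = F.Φ s y₂) :
    (fun u => F.Φ u y₁) =ᶠ[𝓝[>] s] fun u => F.Φ u y₂ := by
  by_cases h₁ : F.τ y₁ ≤ ENNReal.ofReal s
  · have h₂ := F.τ_le_of_Φ_eq hs h₁ h
    filter_upwards [self_mem_nhdsWithin] with u hu
    rw [F.frozen y₁ s u h₁ (le_of_lt hu), F.frozen y₂ s u h₂ (le_of_lt hu), h]
  · have h₂ : ¬ F.τ y₂ ≤ ENNReal.ofReal s :=
      fun h₂ => h₁ (F.τ_le_of_Φ_eq hs h₂ h.symm)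
    obtain ⟨m, -, hsm, hm⟩ :=
      ENNReal.lt_iff_exists_real_btwn.1 (lt_min (not_le.1 h₁) (not_le.1 h₂))
    have hsm : s < m := (ENNReal.ofReal_lt_ofReal_iff'.1 hsm).1
    filter_upwards [Icc_mem_nhdsGT hsm] with u hu
    exact F.eqOn_Icc_of_ofReal_le_τ hv hs (hm.le.trans (min_le_left _ _))
      (hm.le.trans (min_le_right _ _)) h hu

theorem Φ_mono {K : ℝ≥0} (hv : LipschitzWith K F.v) {t : ℝ} (ht : 0 ≤ t) :
    Monotone (F.Φ t) := by
  intro y₁ y₂ hy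
  refine (F.cont_t y₁).le_of_eventuallyEq_nhdsGT_of_eq (F.cont_t y₂) ht ?_
    fun s hs => F.eventuallyEq_nhdsGT_of_Φ_eq hv hs.1
  simpa only [F.init] using hy

def hittingSet (T z : ℝ) : Set I01 :=
  {y | F.τ y < ENNReal.ofReal T ∧ (F.exitPoint y : ℝ) = z}

theorem ordConnected_hittingSet {K : ℝ≥0} (hv : LipschitzWith K F.v) (T z : ℝ) :
    (F.hittingSet T z).OrdConnected := by
  refine ⟨fun y₁ hy₁ y₂ hy₂ y hy => ?_⟩
  set t := (max (F.τ y₁) (F.τ y₂)).toReal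
  have hτ : max (F.τ y₁) (F.τ y₂) < ENNReal.ofReal T := max_lt hy₁.1 hy₂.1
  have ht : ENNReal.ofReal t = max (F.τ y₁) (F.τ y₂) := ENNReal.ofReal_toReal hτ.ne_top
  have ht₀ : 0 ≤ t := ENNReal.toReal_nonneg
  have hΦ₁ := F.Φ_eq_exitPoint ht₀ (ht ▸ le_max_left _ _)
  have hΦ₂ := F.Φ_eq_exitPoint ht₀ (ht ▸ le_max_right _ _)
  have hΦ : F.Φ t y = F.exitPoint y₁ := by
    refine le_antisymm ?_ (hΦ₁ ▸ F.Φ_mono hv ht₀ hy.1)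
    refine (F.Φ_mono hv ht₀ hy.2).trans_eq (hΦ₂.trans (Subtype.ext ?_))
    rw [hy₁.2, hy₂.2]
  have hτy := F.τ_le_of_Φ_eq_exitPoint ht₀ hy₁.1.ne_top hΦ
  refine ⟨hτy.trans_lt (ht ▸ hτ), ?_⟩
  rw [← F.Φ_eq_exitPoint ht₀ hτy, hΦ, hy₁.2]

end StoppedFlow

theorem hitting_sets_connected_disjoint_general (F : StoppedFlow) (K : ℝ≥0)
    (hv : LipschitzWith K F.v) (T : ℝ) :
    IsPreconnected {y : I01 | F.τ y < ENNReal.ofReal T ∧ (F.Φ (F.τ y).toReal y : ℝ) = 0} ∧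
    IsPreconnected {y : I01 | F.τ y < ENNReal.ofReal T ∧ (F.Φ (F.τ y).toReal y : ℝ) = 1} ∧
    Disjoint {y : I01 | F.τ y < ENNReal.ofReal T ∧ (F.Φ (F.τ y).toReal y : ℝ) = 0}
      {y : I01 | F.τ y < ENNReal.ofReal T ∧ (F.Φ (F.τ y).toReal y : ℝ) = 1} := by
  refine ⟨(F.ordConnected_hittingSet hv T 0).isPreconnected,
    (F.ordConnected_hittingSet hv T 1).isPreconnected, ?_⟩
  rw [Set.disjoint_left]
  rintro y ⟨-, h₀⟩ ⟨-, h₁⟩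
  exact zero_ne_one (h₀.symm.trans h₁)

/-- For `z ∈ {0,1}`, the set `Ω_z^T` of initial points whose stopped trajectory reaches
the boundary point `z` strictly before time `T` is a connected subset of `[0,1]`, and
`Ω_0^T`, `Ω_1^T` are disjoint. -/
theorem hitting_sets_connected_disjoint (F : StoppedFlow) (K : ℝ≥0)
    (hv : LipschitzWith K F.v) (T : ℝ) (hT : 0 < T) :
    IsPreconnected {y : I01 | F.τ y < ENNReal.ofReal T ∧ (F.Φ (F.τ y).toReal y : ℝ) = 0} ∧
    IsPreconnected {y : I01 | F.τ y < ENNReal.ofReal T ∧ (F.Φ (F.τ y).toReal y : ℝ) = 1} ∧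
    Disjoint {y : I01 | F.τ y < ENNReal.ofReal T ∧ (F.Φ (F.τ y).toReal y : ℝ) = 0}
      {y : I01 | F.τ y < ENNReal.ofReal T ∧ (F.Φ (F.τ y).toReal y : ℝ) = 1} :=
  hitting_sets_connected_disjoint_general F K hv T

end
end
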